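/- arXiv:1605.02100 — 2 statements merged into one kernel-verified Lean document; each statement's English description precedes it below -/
import Mathlib

section
/- If λ is totally dissipative with respect to a group action (X is a countable union of wandering sets) and A ⊂ X is a recurrent set, then A is λ-negligible. -/
open MeasureTheory Filter Set

/-- A wandering set: almost every point visits it along a relatively compact set of group
elements only. -/
def IsWanderingSet {H X : Type*} [SMul H X] [TopologicalSpace H] [MeasurableSpace X]
    (lam : Measure X) (W : Set X) : Prop :=
  MeasurableSet W ∧ ∀ᵐ x ∂lam, IsCompact (closure {g : H | g • x ∈ W})

/-- A recurrent set: for every Borel subset `B ⊆ A` and almost every `x ∈ B`, the return-time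
set `{g : g • x ∈ B}` is not relatively compact. -/
def IsRecurrentSet {H X : Type*} [SMul H X] [TopologicalSpace H] [MeasurableSpace X]
    (lam : Measure X) (A : Set X) : Prop :=
  MeasurableSet A ∧ ∀ B ⊆ A, MeasurableSet B →
    ∀ᵐ x ∂lam, x ∈ B → ¬ IsCompact (closure {g : H | g • x ∈ B})

section

variable {H X : Type*} [SMul H X] [TopologicalSpace H] [MeasurableSpace X] {lam : Measure X}
  {A B : Set X}

theorem IsWanderingSet.mono (hA : IsWanderingSet (H := H) lam A) (hB : MeasurableSet B)
    (hBA : B ⊆ A) : IsWanderingSet (H := H) lam B :=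
  ⟨hB, hA.2.mono fun _ hx =>
    hx.of_isClosed_subset isClosed_closure (closure_mono fun _ hg => hBA hg)⟩

theorem IsRecurrentSet.mono (hA : IsRecurrentSet (H := H) lam A) (hB : MeasurableSet B)
    (hBA : B ⊆ A) : IsRecurrentSet (H := H) lam B :=
  ⟨hB, fun C hCB hC => hA.2 C (hCB.trans hBA) hC⟩

theorem IsRecurrentSet.measure_eq_zero_of_isWanderingSet (hAr : IsRecurrentSet (H := H) lam A)
    (hAw : IsWanderingSet (H := H) lam A) : lam A = 0 := by
  rw [measure_eq_zero_iff_ae_notMem]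
  filter_upwards [hAw.2, hAr.2 A Subset.rfl hAr.1] with x hcompact hnoncompact hx
  exact hnoncompact hx hcompact

end

theorem recurrentSet_null_of_totallyDissipative_general
    {H X : Type*} [Group H] [TopologicalSpace H]
    [MulAction H X] [MeasurableSpace X]
    (lam : Measure X)
    (W : ℕ → Set X) (hW : ∀ i, IsWanderingSet (H := H) lam (W i))
    (hcover : (⋃ i, W i) = Set.univ)
    (A : Set X) (hA : IsRecurrentSet (H := H) lam A) :
    lam A = 0 := by
  have hpiece : ∀ i, lam (A ∩ W i) = 0 := fun i =>
    have hmeas : MeasurableSet (A ∩ W i) := hA.1.inter (hW i).1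
    (hA.mono hmeas inter_subset_left).measure_eq_zero_of_isWanderingSet
      ((hW i).mono hmeas inter_subset_right)
  have hA_eq : A = ⋃ i, A ∩ W i := by rw [← inter_iUnion, hcover, inter_univ]
  rw [hA_eq]
  exact measure_iUnion_null hpiece

/-- If `lam` is totally dissipative (the space is a countable union of wandering sets), then
every recurrent set is negligible. -/
theorem recurrentSet_null_of_totallyDissipative
    {H X : Type*} [Group H] [TopologicalSpace H] [IsTopologicalGroup H]
    [LocallyCompactSpace H] [SecondCountableTopology H]
    [MulAction H X] [MeasurableSpace X]
    (lam : Measure X) [SigmaFinite lam]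
    (W : ℕ → Set X) (hW : ∀ i, IsWanderingSet (H := H) lam (W i))
    (hcover : (⋃ i, W i) = Set.univ)
    (A : Set X) (hA : IsRecurrentSet (H := H) lam A) :
    lam A = 0 :=
  recurrentSet_null_of_totallyDissipative_general lam W hW hcover A hA
end

section
/- Suppose that for (Lebesgue-Grassmannian-)almost every k-plane V in ℝⁿ, the pushforward of a probability measure μ under the orthogonal projection onto V has lower dimension min(k, dim_low μ), and suppose a distribution P on probability measures on ℝⁿ is invariant under the pushforward action of SO(n). If for P-almost every μ the lower dimension dim_low(μ) equals a constant δ, then for every k-plane V, ∫ dim_low(π_V μ) dP(μ) = min(k, δ). -/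
open MeasureTheory Filter Metric Set

/-- Lower local dimension of a measure at a point. -/
noncomputable def lowerLocalDim {X : Type*} [MetricSpace X] [MeasurableSpace X]
    (μ : Measure X) (x : X) : ℝ :=
  liminf (fun ρ : ℝ => Real.log (μ (ball x ρ)).toReal / Real.log ρ)
    (nhdsWithin 0 (Ioi 0))

/-- Lower dimension of a measure: the `μ`-essential infimum of the lower local dimension. -/
noncomputable def lowerDim {X : Type*} [MetricSpace X] [MeasurableSpace X]
    (μ : Measure X) : ℝ :=
  essInf (lowerLocalDim μ) μ

/-- Corollary 2.7 of the paper. Here `νG` is the `O(n)`-invariant probability measure on the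
orthogonal group (whose pushforwards `g ↦ g(V₀)` give the invariant measure on the
Grassmannian of `k`-planes), `P` is an `SO(n)`-invariant distribution on probability measures
on `ℝⁿ`, Marstrand's theorem is assumed in the form that for every probability measure `μ`
and almost every `k`-plane the projection has lower dimension `min(k, dim_low μ)`, and
`P`-almost every `μ` has lower dimension `δ`. Then for *every* `k`-plane `V`, the mean lower
dimension of the projection onto `V` equals `min(k, δ)`. -/
noncomputable instance matrixMeasurableSpace {n : ℕ} :
    MeasurableSpace (Matrix (Fin n) (Fin n) ℝ) :=
  MeasurableSpace.pi

/-!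
Marstrand's theorem says that for `P`-a.e. `μ` the projection of `μ` onto the rotated plane
`g V` has lower dimension `min k δ` for `νG`-a.e. `g`. Lower dimensions can be computed along
rational radii and rational levels, so this quantity is jointly measurable in `(μ, g)` and Fubini
swaps the two quantifiers: for `νG`-a.e. `g` it holds for `P`-a.e. `μ`. Left invariance of `νG`
lets us pick such a `g` in `SO(n)`. Since `π_{gV} (g x) = g (π_V x)` and `g` is an isometry,
`SO(n)`-invariance of `P` transfers the statement from `g V` to `V`, so the integrand is
`P`-a.e. equal to `min k δ`.
-/

open scoped Topology

lemma liminf_nhdsGT_inf_principal_of_dense {β : Type*} [ConditionallyCompleteLinearOrder β]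
    [TopologicalSpace β] [ClosedIciTopology β] {f : ℝ → β} {a b : ℝ} (hab : a < b)
    {s : Set ℝ} (hs : Dense s) (hf : ∀ x ∈ Ioo a b, ContinuousWithinAt f (Iio x) x) :
    liminf f (𝓝[>] a ⊓ 𝓟 s) = liminf f (𝓝[>] a) := by
  simp only [liminf, limsInf, eventually_map]
  congr 1
  ext c
  refine ⟨fun h => ?_, fun h => Eventually.filter_mono inf_le_left h⟩
  obtain ⟨ε, hε, hεs⟩ := mem_nhdsGT_iff_exists_Ioo_subset.mp (eventually_inf_principal.mp h)
  filter_upwards [Ioo_mem_nhdsGT (lt_min hε hab)] with x hx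
  have : (𝓝[Ioo a x ∩ s] x).NeBot := by
    rw [← mem_closure_iff_nhdsWithin_neBot]
    refine closure_minimal (hs.open_subset_closure_inter isOpen_Ioo) isClosed_closure ?_
    rw [closure_Ioo hx.1.ne]
    exact right_mem_Icc.mpr hx.1.le
  refine ge_of_tendsto ((hf x ⟨hx.1, hx.2.trans_le (min_le_right _ _)⟩).mono_left
    (nhdsWithin_mono _ fun y (hy : y ∈ Ioo a x ∩ s) => hy.1.2))
    (eventually_nhdsWithin_of_forall fun y (hy : y ∈ Ioo a x ∩ s) =>
      hεs ⟨hy.1.1, hy.1.2.trans (hx.2.trans_le (min_le_left _ _))⟩ hy.2)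

-- When `S = univ`, both sides are the junk value `0` of a supremum of an unbounded set.
lemma Real.sSup_eq_iSup_rat_of_isLowerSet {S : Set ℝ} [DecidablePred (· ∈ S)]
    (hS : IsLowerSet S) (h0 : 0 ∈ S) :
    sSup S = ⨆ q : ℚ, if (q : ℝ) ∈ S then (q : ℝ) else 0 := by
  by_cases hbdd : BddAbove S
  · have hle : ∀ q : ℚ, (if (q : ℝ) ∈ S then (q : ℝ) else 0) ≤ sSup S := fun q => by
      split_ifs with hq
      exacts [le_csSup hbdd hq, le_csSup hbdd h0]
    refine le_antisymm (le_of_forall_rat_lt_imp_le fun q hq => ?_) (ciSup_le hle)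
    obtain ⟨y, hy, hqy⟩ := exists_lt_of_lt_csSup ⟨0, h0⟩ hq
    calc (q : ℝ) = if (q : ℝ) ∈ S then (q : ℝ) else 0 := (if_pos (hS hqy.le hy)).symm
      _ ≤ _ := le_ciSup ⟨sSup S, forall_mem_range.mpr hle⟩ q
  · have hS_univ : S = univ := eq_univ_of_forall fun x => by
      obtain ⟨y, hy, hxy⟩ := not_bddAbove_iff.mp hbdd x
      exact hS hxy.le hy
    subst hS_univ
    rw [Real.sSup_univ, Real.iSup_of_not_bddAbove]
    rintro ⟨M, hM⟩
    obtain ⟨q, hq⟩ := exists_rat_gt M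
    exact hq.not_ge (hM ⟨q, if_pos (mem_univ _)⟩)

lemma essInf_eq_iSup_rat {α : Type*} [MeasurableSpace α] {μ : Measure α} {f : α → ℝ}
    (hf : ∀ᵐ x ∂μ, 0 ≤ f x) :
    essInf f μ = ⨆ q : ℚ, if μ {x | f x < q} = 0 then (q : ℝ) else 0 := by
  rw [essInf_eq_sSup]
  refine Real.sSup_eq_iSup_rat_of_isLowerSet
    (fun a b (hba : b ≤ a) (ha : μ {x | f x < a} = 0) =>
      measure_mono_null (fun x (hx : f x < b) => hx.trans_le hba) ha) ?_
  simpa only [mem_ofPred_eq, ae_iff, not_le] using hf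

lemma ProbabilityTheory.Kernel.measurable_map {α β γ : Type*} [MeasurableSpace α]
    [MeasurableSpace β] [MeasurableSpace γ] (κ : Kernel α β) [IsSFiniteKernel κ]
    {f : α → β → γ} (hf : Measurable (Function.uncurry f)) :
    Measurable fun a => (κ a).map (f a) := by
  refine Measure.measurable_of_measurable_coe _ fun s hs => ?_
  convert κ.measurable_kernel_prodMk_left (hf hs) using 1
  funext a
  exact Measure.map_apply hf.of_uncurry_left hs

section LowerDim

open ProbabilityTheory

variable {X : Type*} [MetricSpace X] [MeasurableSpace X]

lemma continuousWithinAt_measure_ball (ν : Measure X) (x : X) (r : ℝ) :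
    ContinuousWithinAt (fun ρ => ν (ball x ρ)) (Iio r) r := by
  have hmono : Monotone fun ρ => ν (ball x ρ) := fun _ _ h => measure_mono (ball_subset_ball h)
  have hball : ball x r = ⋃ k : ℕ, ball x (r - 1 / (k + 1)) := by
    ext y
    simp only [mem_ball, mem_iUnion]
    exact ⟨fun h => (exists_nat_one_div_lt (sub_pos.mpr h)).imp fun k hk => by linarith,
      fun ⟨k, hk⟩ => hk.trans (sub_lt_self r Nat.one_div_pos_of_nat)⟩
  have hsup : sSup ((fun ρ => ν (ball x ρ)) '' Iio r) = ν (ball x r) := by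
    refine le_antisymm (sSup_le (forall_mem_image.mpr fun ρ hρ => hmono (le_of_lt hρ))) ?_
    rw [hball, Monotone.measure_iUnion fun k l hkl => ball_subset_ball (by gcongr)]
    exact iSup_le fun k => le_sSup ⟨_, sub_lt_self r Nat.one_div_pos_of_nat, rfl⟩
  simpa only [ContinuousWithinAt, hsup] using hmono.tendsto_nhdsLT r

lemma continuousWithinAt_log_measure_ball_div_log (ν : Measure X) [IsFiniteMeasure ν] (x : X)
    {r : ℝ} (hr : r ∈ Ioo 0 1) :
    ContinuousWithinAt (fun ρ => Real.log (ν (ball x ρ)).toReal / Real.log ρ) (Iio r) r := by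
  by_cases h0 : ν (ball x r) = 0
  -- `Real.log 0 = 0`, so the quotient vanishes identically once the ball is null.
  · have hzero : ∀ ρ ≤ r, Real.log (ν (ball x ρ)).toReal / Real.log ρ = 0 :=
      fun ρ hρ => by simp [measure_mono_null (ball_subset_ball hρ) h0]
    exact continuousWithinAt_const.congr (fun ρ hρ => hzero ρ hρ.le) (hzero r le_rfl)
  · refine ContinuousWithinAt.div ?_ (Real.continuousAt_log hr.1.ne').continuousWithinAt
      (Real.log_neg hr.1 hr.2).ne
    have hball : ContinuousWithinAt (fun ρ => (ν (ball x ρ)).toReal) (Iio r) r :=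
      (ENNReal.continuousAt_toReal (measure_ne_top ν _)).comp_continuousWithinAt
        (f := fun ρ => ν (ball x ρ)) (continuousWithinAt_measure_ball ν x r)
    exact hball.log (ENNReal.toReal_ne_zero.mpr ⟨h0, measure_ne_top ν _⟩)

lemma lowerLocalDim_eq_liminf_rat (ν : Measure X) [IsFiniteMeasure ν] (x : X) :
    lowerLocalDim ν x = liminf (fun ρ => Real.log (ν (ball x ρ)).toReal / Real.log ρ)
      (𝓝[>] 0 ⊓ 𝓟 (range ((↑) : ℚ → ℝ))) :=
  (liminf_nhdsGT_inf_principal_of_dense one_pos Rat.denseRange_cast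
    fun _ hr => continuousWithinAt_log_measure_ball_div_log ν x hr).symm

lemma lowerLocalDim_nonneg {ν : Measure X} (hν : ν univ ≤ 1) (x : X) :
    0 ≤ lowerLocalDim ν x := by
  refine Real.sSup_nonneg' ⟨0, ?_, le_rfl⟩
  filter_upwards [Ioo_mem_nhdsGT one_pos] with ρ hρ
  have hball : (ν (ball x ρ)).toReal ≤ 1 := ENNReal.toReal_le_of_le_ofReal zero_le_one
    (by simpa using (measure_mono (subset_univ _)).trans hν)
  exact div_nonneg_of_nonpos (Real.log_nonpos ENNReal.toReal_nonneg hball)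
    (Real.log_neg hρ.1 hρ.2).le

lemma lowerDim_map_of_isometry {Y : Type*} [MetricSpace Y] [MeasurableSpace Y] {f : X → Y}
    (hf : Isometry f) (hfm : MeasurableEmbedding f) (ν : Measure X) :
    lowerDim (ν.map f) = lowerDim ν := by
  have hloc : lowerLocalDim (ν.map f) ∘ f = lowerLocalDim ν := funext fun x => by
    simp only [Function.comp_apply, lowerLocalDim, hfm.map_apply, hf.preimage_ball]
  rw [lowerDim, lowerDim, ← hloc, essInf_eq_sSup, essInf_eq_sSup]
  simp only [hfm.map_apply, preimage_ofPred_eq, Function.comp_apply]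

variable [OpensMeasurableSpace X] [SecondCountableTopology X] {α : Type*} [MeasurableSpace α]

lemma ProbabilityTheory.Kernel.measurable_lowerLocalDim (κ : Kernel α X) [IsFiniteKernel κ]
    {g : α → X} (hg : Measurable g) : Measurable fun a => lowerLocalDim (κ a) (g a) := by
  simp_rw [lowerLocalDim_eq_liminf_rat]
  obtain ⟨u, hu⟩ := (𝓝[>] (0 : ℝ)).exists_antitone_basis
  refine Measurable.liminf' (fun ρ => ?_) ⟨hu.toHasBasis.inf_principal _, to_countable _⟩
    fun _ => (countable_range _).mono inter_subset_right
  have hball : MeasurableSet {p : α × X | dist p.2 (g p.1) < ρ} :=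
    measurableSet_lt (measurable_snd.dist (hg.comp measurable_fst)) measurable_const
  exact ((κ.measurable_kernel_prodMk_left hball).ennreal_toReal.log).div_const _

lemma Measurable.lowerDim {f : α → Measure X} (hf : Measurable f)
    (hf_le : ∀ a, f a univ ≤ 1) :
    Measurable fun a => lowerDim (f a) := by
  let κ : Kernel α X := ⟨f, hf⟩
  have : IsFiniteKernel κ := ⟨⟨1, ENNReal.one_lt_top, hf_le⟩⟩
  have hdim : (fun a => _root_.lowerDim (f a)) = fun a =>
      ⨆ q : ℚ, if f a {x | lowerLocalDim (f a) x < q} = 0 then (q : ℝ) else 0 :=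
    funext fun a => essInf_eq_iSup_rat (ae_of_all _ (lowerLocalDim_nonneg (hf_le a)))
  rw [hdim]
  refine Measurable.iSup fun q => Measurable.ite ?_ measurable_const measurable_const
  have hlt : MeasurableSet {p : α × X | lowerLocalDim (κ p.1) p.2 < q} :=
    measurableSet_lt ((κ.comap Prod.fst measurable_fst).measurable_lowerLocalDim measurable_snd)
      measurable_const
  exact κ.measurable_kernel_prodMk_left hlt (measurableSet_singleton 0)

end LowerDim

section Projection

variable {E E' : Type*} [NormedAddCommGroup E] [InnerProductSpace ℝ E] [MeasurableSpace E]
  [BorelSpace E] [NormedAddCommGroup E'] [InnerProductSpace ℝ E'] [MeasurableSpace E']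
  [BorelSpace E']

lemma lowerDim_map_orthogonalProjectionOnto (K : Submodule ℝ E) [K.HasOrthogonalProjection]
    (μ : Measure E) :
    lowerDim (μ.map K.orthogonalProjectionOnto) = lowerDim (μ.map K.starProjection) := by
  have hK : IsClosed (K : Set E) := K.orthogonal_orthogonal ▸ Kᗮ.isClosed_orthogonal
  have hproj : ⇑K.starProjection = ((↑) : K → E) ∘ K.orthogonalProjectionOnto := rfl
  rw [hproj, ← Measure.map_map continuous_subtype_val.measurable
      K.orthogonalProjectionOnto.continuous.measurable]
  exact (lowerDim_map_of_isometry isometry_subtype_coe (.subtype_coe hK.measurableSet) _).symm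

lemma lowerDim_map_orthogonalProjectionOnto_map (e : E ≃ₗᵢ[ℝ] E') (K : Submodule ℝ E)
    [K.HasOrthogonalProjection] (μ : Measure E') :
    lowerDim (μ.map (K.map (e.toLinearEquiv : E →ₗ[ℝ] E')).orthogonalProjectionOnto) =
      lowerDim (μ.map (K.starProjection ∘ e.symm)) := by
  have hproj : ⇑(K.map (e.toLinearEquiv : E →ₗ[ℝ] E')).starProjection =
      e ∘ K.starProjection ∘ e.symm :=
    funext (Submodule.starProjection_map_apply e K)
  rw [lowerDim_map_orthogonalProjectionOnto, hproj,
    ← Measure.map_map e.continuous.measurable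
      (K.starProjection.continuous.comp e.symm.continuous).measurable,
    lowerDim_map_of_isometry e.isometry e.toHomeomorph.measurableEmbedding]

end Projection

namespace Matrix

section UnitaryGroup

variable {ι 𝕜 : Type*} [Fintype ι] [DecidableEq ι] [RCLike 𝕜] {g : Matrix ι ι 𝕜}

noncomputable def toEuclideanLinearIsometryEquiv (hg : g ∈ unitaryGroup ι 𝕜) :
    EuclideanSpace 𝕜 ι ≃ₗᵢ[𝕜] EuclideanSpace 𝕜 ι :=
  Unitary.linearIsometryEquiv
    ⟨toEuclideanCLM (n := ι) (𝕜 := 𝕜) g, Unitary.map_mem _ hg⟩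

lemma toEuclideanLinearIsometryEquiv_toLinearEquiv (hg : g ∈ unitaryGroup ι 𝕜) :
    ((toEuclideanLinearIsometryEquiv hg).toLinearEquiv :
      EuclideanSpace 𝕜 ι →ₗ[𝕜] EuclideanSpace 𝕜 ι) = toEuclideanLin g :=
  rfl

lemma coe_toEuclideanLinearIsometryEquiv_symm (hg : g ∈ unitaryGroup ι 𝕜) :
    ⇑(toEuclideanLinearIsometryEquiv hg).symm = toEuclideanLin (star g) :=
  funext fun x => congr($((map_star (toEuclideanCLM (n := ι) (𝕜 := 𝕜)) g).symm) x)

end UnitaryGroup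

lemma det_eq_one_or_neg_one_of_mem_orthogonalGroup {ι R : Type*} [Fintype ι] [DecidableEq ι]
    [CommRing R] [NoZeroDivisors R] {g : Matrix ι ι R} (hg : g ∈ orthogonalGroup ι R) :
    g.det = 1 ∨ g.det = -1 := by
  have h := congrArg det ((mem_orthogonalGroup_iff' ι R).mp hg)
  rw [det_mul, det_transpose, det_one] at h
  exact mul_self_eq_one_iff.mp h

end Matrix

section Orthogonal

open ProbabilityTheory

variable {n : ℕ}

local notation "𝔼" => EuclideanSpace ℝ (Fin n)

instance matrixBorelSpace : BorelSpace (Matrix (Fin n) (Fin n) ℝ) :=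
  inferInstanceAs (BorelSpace (Fin n → Fin n → ℝ))

lemma exists_measurable_eq_lowerDim_map_orthogonalProjectionOnto (V : Submodule ℝ 𝔼) :
    ∃ Φ : Measure 𝔼 × Matrix (Fin n) (Fin n) ℝ → ℝ, Measurable Φ ∧
      ∀ μ : Measure 𝔼, IsProbabilityMeasure μ → ∀ g ∈ Matrix.orthogonalGroup (Fin n) ℝ,
        Φ (μ, g) = lowerDim (μ.map fun x =>
          (V.map (Matrix.toEuclideanLin g : 𝔼 →ₗ[ℝ] 𝔼)).orthogonalProjectionOnto x) := by
  -- Truncating to sub-probability measures gives a finite kernel on which `lowerLocalDim` is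
  -- nonnegative, and changes nothing on probability measures.
  let κ : Kernel (Measure 𝔼) 𝔼 :=
    ⟨fun μ => if μ univ ≤ 1 then μ else 0,
      Measurable.ite (measurableSet_le (Measure.measurable_coe .univ) measurable_const)
        measurable_id measurable_const⟩
  have hκ : ∀ μ, κ μ univ ≤ 1 := fun μ => by
    dsimp only [κ, Kernel.coe_mk]
    split_ifs with h
    exacts [h, by simp]
  have : IsFiniteKernel κ := ⟨⟨1, ENNReal.one_lt_top, hκ⟩⟩
  let F : Matrix (Fin n) (Fin n) ℝ → 𝔼 → 𝔼 :=
    fun g x => V.starProjection (Matrix.toEuclideanLin (star g) x)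
  have hF : Measurable (Function.uncurry F) :=
    (V.starProjection.continuous.comp (by simp only [Matrix.toLpLin_apply]; fun_prop)).measurable
  refine ⟨fun p => lowerDim ((κ p.1).map (F p.2)),
    ((κ.comap Prod.fst measurable_fst).measurable_map (f := fun p => F p.2)
      (by fun_prop)).lowerDim fun p => ?_, fun μ hμ g hg => ?_⟩
  · rw [Kernel.comap_apply, Measure.map_apply hF.of_uncurry_left .univ]
    exact hκ _
  · simp only [κ, Kernel.coe_mk, measure_univ, le_refl, if_true]
    rw [← Matrix.toEuclideanLinearIsometryEquiv_toLinearEquiv hg,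
      lowerDim_map_orthogonalProjectionOnto_map, Matrix.coe_toEuclideanLinearIsometryEquiv_symm]
    rfl

lemma exists_mem_specialOrthogonalGroup_of_ae {νG : Measure (Matrix (Fin n) (Fin n) ℝ)}
    [NeZero νG] (hνG : ∀ᵐ g ∂νG, g ∈ Matrix.orthogonalGroup (Fin n) ℝ)
    (hνG_inv : ∀ h ∈ Matrix.orthogonalGroup (Fin n) ℝ, νG.map (fun g => h * g) = νG)
    {p : Matrix (Fin n) (Fin n) ℝ → Prop} (hp : ∀ᵐ g ∂νG, p g) :
    ∃ g ∈ Matrix.specialOrthogonalGroup (Fin n) ℝ, p g := by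
  obtain ⟨g₁, hg₁, hpg₁⟩ := (hνG.and hp).exists
  have hp_mul : ∀ᵐ g ∂νG, p (g₁ * g) :=
    ae_of_ae_map (continuous_const.mul continuous_id).measurable.aemeasurable
      ((hνG_inv g₁ hg₁).symm ▸ hp)
  obtain ⟨g₂, hg₂, hpg₂, hpg₁₂⟩ := (hνG.and (hp.and hp_mul)).exists
  rcases Matrix.det_eq_one_or_neg_one_of_mem_orthogonalGroup hg₁ with h₁ | h₁
  · exact ⟨g₁, Matrix.mem_specialOrthogonalGroup_iff.mpr ⟨hg₁, h₁⟩, hpg₁⟩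
  rcases Matrix.det_eq_one_or_neg_one_of_mem_orthogonalGroup hg₂ with h₂ | h₂
  · exact ⟨g₂, Matrix.mem_specialOrthogonalGroup_iff.mpr ⟨hg₂, h₂⟩, hpg₂⟩
  · exact ⟨g₁ * g₂, Matrix.mem_specialOrthogonalGroup_iff.mpr
      ⟨mul_mem hg₁ hg₂, by rw [Matrix.det_mul, h₁, h₂]; norm_num⟩, hpg₁₂⟩

lemma ae_lowerDim_map_orthogonalProjectionOnto_of_map_eq {P : Measure (Measure 𝔼)}
    {g : Matrix (Fin n) (Fin n) ℝ} (hg : g ∈ Matrix.orthogonalGroup (Fin n) ℝ)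
    (hP : P.map (fun μ => μ.map (Matrix.toEuclideanLin g : 𝔼 →ₗ[ℝ] 𝔼)) = P)
    (V : Submodule ℝ 𝔼) {q : ℝ → Prop}
    (h : ∀ᵐ μ ∂P, q (lowerDim (μ.map fun x =>
      (V.map (Matrix.toEuclideanLin g : 𝔼 →ₗ[ℝ] 𝔼)).orthogonalProjectionOnto x))) :
    ∀ᵐ μ ∂P, q (lowerDim (μ.map fun x => V.orthogonalProjectionOnto x)) := by
  set e := Matrix.toEuclideanLinearIsometryEquiv hg
  have hrot : Measurable fun μ : Measure 𝔼 => μ.map e :=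
    Measure.measurable_map _ e.continuous.measurable
  rw [← Matrix.toEuclideanLinearIsometryEquiv_toLinearEquiv hg, ← hP] at h
  filter_upwards [ae_of_ae_map hrot.aemeasurable h] with μ hμ
  rwa [lowerDim_map_orthogonalProjectionOnto_map, Measure.map_map
    (V.starProjection.continuous.comp e.symm.continuous).measurable e.continuous.measurable,
    Function.comp_assoc, e.symm_comp_self, Function.comp_id,
    ← lowerDim_map_orthogonalProjectionOnto] at hμ

end Orthogonal

theorem mean_proj_dim_of_SO_invariant_general {n k : ℕ}
    (νG : Measure (Matrix (Fin n) (Fin n) ℝ)) [IsProbabilityMeasure νG]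
    (hνGsupp : ∀ᵐ g ∂νG, g ∈ Matrix.orthogonalGroup (Fin n) ℝ)
    (hνGinv : ∀ h : Matrix (Fin n) (Fin n) ℝ, h ∈ Matrix.orthogonalGroup (Fin n) ℝ →
      νG.map (fun g => h * g) = νG)
    (P : Measure (Measure (EuclideanSpace ℝ (Fin n)))) [IsProbabilityMeasure P]
    (hPprob : ∀ᵐ μ ∂P, IsProbabilityMeasure μ)
    (hPSO : ∀ g : Matrix (Fin n) (Fin n) ℝ, g ∈ Matrix.orthogonalGroup (Fin n) ℝ →
      g.det = 1 →
      P.map (fun μ => μ.map (Matrix.toEuclideanLin g : EuclideanSpace ℝ (Fin n) →ₗ[ℝ] EuclideanSpace ℝ (Fin n))) = P)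
    (δ : ℝ) (hδ : ∀ᵐ μ ∂P, lowerDim μ = δ)
    (hMarstrand : ∀ μ : Measure (EuclideanSpace ℝ (Fin n)), IsProbabilityMeasure μ →
      ∀ V₀ : Submodule ℝ (EuclideanSpace ℝ (Fin n)), Module.finrank ℝ V₀ = k →
      ∀ᵐ g ∂νG, lowerDim (μ.map (fun x =>
        Submodule.orthogonalProjectionOnto (V₀.map (Matrix.toEuclideanLin g : EuclideanSpace ℝ (Fin n) →ₗ[ℝ] EuclideanSpace ℝ (Fin n))) x)) =
        min (k : ℝ) (lowerDim μ))
    (V : Submodule ℝ (EuclideanSpace ℝ (Fin n))) (hV : Module.finrank ℝ V = k) :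
    (∫ μ, lowerDim (μ.map (fun x => Submodule.orthogonalProjectionOnto V x)) ∂P) = min (k : ℝ) δ := by
  obtain ⟨Φ, hΦ_meas, hΦ⟩ := exists_measurable_eq_lowerDim_map_orthogonalProjectionOnto V
  have hae : ∀ᵐ μ ∂P, ∀ᵐ g ∂νG, Φ (μ, g) = min (k : ℝ) δ := by
    filter_upwards [hPprob, hδ] with μ hμ hμδ
    filter_upwards [hMarstrand μ hμ V hV, hνGsupp] with g hg hgO
    rw [hΦ μ hμ g hgO, hg, hμδ]
  obtain ⟨g, ⟨hgO, hg_det⟩, hg⟩ := exists_mem_specialOrthogonalGroup_of_ae hνGsupp hνGinv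
    ((Measure.ae_ae_comm (p := fun μ g => Φ (μ, g) = min (k : ℝ) δ)
      (hΦ_meas (measurableSet_singleton _))).mp hae)
  have hV_ae := ae_lowerDim_map_orthogonalProjectionOnto_of_map_eq hgO (hPSO g hgO hg_det) V
    (q := (· = min (k : ℝ) δ)) <| by
      filter_upwards [hg, hPprob] with μ hμ hμ_prob
      rwa [← hΦ μ hμ_prob g hgO]
  exact (integral_congr_ae hV_ae).trans (by simp)

theorem mean_proj_dim_of_SO_invariant {n k : ℕ} (hk1 : 1 ≤ k) (hkn : k ≤ n - 1)
    (νG : Measure (Matrix (Fin n) (Fin n) ℝ)) [IsProbabilityMeasure νG]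
    (hνGsupp : ∀ᵐ g ∂νG, g ∈ Matrix.orthogonalGroup (Fin n) ℝ)
    (hνGinv : ∀ h : Matrix (Fin n) (Fin n) ℝ, h ∈ Matrix.orthogonalGroup (Fin n) ℝ →
      νG.map (fun g => h * g) = νG)
    (P : Measure (Measure (EuclideanSpace ℝ (Fin n)))) [IsProbabilityMeasure P]
    (hPprob : ∀ᵐ μ ∂P, IsProbabilityMeasure μ)
    (hPSO : ∀ g : Matrix (Fin n) (Fin n) ℝ, g ∈ Matrix.orthogonalGroup (Fin n) ℝ →
      g.det = 1 →
      P.map (fun μ => μ.map (Matrix.toEuclideanLin g : EuclideanSpace ℝ (Fin n) →ₗ[ℝ] EuclideanSpace ℝ (Fin n))) = P)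
    (δ : ℝ) (hδ : ∀ᵐ μ ∂P, lowerDim μ = δ)
    (hMarstrand : ∀ μ : Measure (EuclideanSpace ℝ (Fin n)), IsProbabilityMeasure μ →
      ∀ V₀ : Submodule ℝ (EuclideanSpace ℝ (Fin n)), Module.finrank ℝ V₀ = k →
      ∀ᵐ g ∂νG, lowerDim (μ.map (fun x =>
        Submodule.orthogonalProjectionOnto (V₀.map (Matrix.toEuclideanLin g : EuclideanSpace ℝ (Fin n) →ₗ[ℝ] EuclideanSpace ℝ (Fin n))) x)) =
        min (k : ℝ) (lowerDim μ))
    (V : Submodule ℝ (EuclideanSpace ℝ (Fin n))) (hV : Module.finrank ℝ V = k) :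
    (∫ μ, lowerDim (μ.map (fun x => Submodule.orthogonalProjectionOnto V x)) ∂P) = min (k : ℝ) δ :=
  mean_proj_dim_of_SO_invariant_general νG hνGsupp hνGinv P hPprob hPSO δ hδ hMarstrand V hV
end
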